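/- arXiv:1903.10358 — 4 statements merged into one kernel-verified Lean document; each statement's English description precedes it below -/
import Mathlib

section
/- Let H be a complex Hilbert space and let S, T be normal bounded linear operators on H with Cartesian decompositions S = A + iC and T = B + iD. Suppose a₁ ≤ A ≤ a₂, b₁ ≤ B ≤ b₂, c₁ ≤ C ≤ c₂ and d₁ ≤ D ≤ d₂ for real numbers a₁, a₂, b₁, b₂, c₁, c₂, d₁, d₂. Then ‖ST − TS‖ ≤ (1/2)·√((a₂−a₁)² + (c₂−c₁)²)·√((b₂−b₁)² + (d₂−d₁)²). -/
/-!
Normality of `S = A + iC` means that `A` and `C` commute, so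
`‖S‖² = ‖S⋆S‖ = ‖A² + C²‖ ≤ ‖A‖² + ‖C‖²`. The numerical range bounds give
`‖A - (a₁ + a₂)/2‖ ≤ (a₂ - a₁)/2`, and likewise for `C`; since shifting `S` by the scalar
`μ = (a₁ + a₂)/2 + i (c₁ + c₂)/2` shifts `A` and `C` by real scalars, `‖S - μ‖` is at most half
the diagonal of the rectangle `[a₁, a₂] × [c₁, c₂]`. The commutator does not change when `S` and
`T` are shifted by scalars, so `‖ST - TS‖ ≤ 2 ‖S - μ‖ ‖T - ν‖` gives the bound.
-/

open Complex ComplexStarModule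

section StarModule

variable {M : Type*} [AddCommGroup M] [Module ℂ M] [StarAddMonoid M] [StarModule ℂ M]
  {a c : M}

lemma realPart_add_I_smul (ha : IsSelfAdjoint a) (hc : IsSelfAdjoint c) :
    (ℜ (a + I • c) : M) = a := by
  simp [realPart_I_smul, hc.imaginaryPart, ha.coe_realPart]

lemma imaginaryPart_add_I_smul (ha : IsSelfAdjoint a) (hc : IsSelfAdjoint c) :
    (ℑ (a + I • c) : M) = c := by
  simp [imaginaryPart_I_smul, ha.imaginaryPart, hc.coe_realPart]

end StarModule

section NonUnitalCStarAlgebra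

variable {E : Type*} [NonUnitalCStarAlgebra E] {a c : E}

lemma isStarNormal_add_I_smul_iff (ha : IsSelfAdjoint a) (hc : IsSelfAdjoint c) :
    IsStarNormal (a + I • c) ↔ Commute a c := by
  rw [isStarNormal_iff_commute_realPart_imaginaryPart, realPart_add_I_smul ha hc,
    imaginaryPart_add_I_smul ha hc]

lemma norm_add_I_smul_sq_le (ha : IsSelfAdjoint a) (hc : IsSelfAdjoint c) (hac : Commute a c) :
    ‖a + I • c‖ ^ 2 ≤ ‖a‖ ^ 2 + ‖c‖ ^ 2 := by
  have := (isStarNormal_add_I_smul_iff ha hc).mpr hac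
  have hstar := star_mul_self_eq_realPart_sq_add_imaginaryPart_sq (a + I • c)
  rw [realPart_add_I_smul ha hc, imaginaryPart_add_I_smul ha hc] at hstar
  rw [sq, ← CStarRing.norm_star_mul_self, hstar, ← ha.norm_mul_self, ← hc.norm_mul_self]
  exact norm_add_le _ _

end NonUnitalCStarAlgebra

section CStarAlgebra

variable {E : Type*} [CStarAlgebra E]

lemma norm_sub_algebraMap_le_of_cartesian {s a c : E} (hs : IsStarNormal s)
    (ha : IsSelfAdjoint a) (hc : IsSelfAdjoint c) (hsac : s = a + I • c) {m n r q : ℝ}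
    (har : ‖a - algebraMap ℂ E m‖ ≤ r) (hcq : ‖c - algebraMap ℂ E n‖ ≤ q) :
    ‖s - algebraMap ℂ E (m + n * I)‖ ≤ √(r ^ 2 + q ^ 2) := by
  have hm : IsSelfAdjoint (algebraMap ℂ E m) := .algebraMap E (Complex.conj_ofReal m)
  have hn : IsSelfAdjoint (algebraMap ℂ E n) := .algebraMap E (Complex.conj_ofReal n)
  have hdec : s - algebraMap ℂ E (m + n * I)
      = (a - algebraMap ℂ E m) + I • (c - algebraMap ℂ E n) := by
    simp only [hsac, Algebra.algebraMap_eq_smul_one]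
    module
  have hcomm : Commute (a - algebraMap ℂ E m) (c - algebraMap ℂ E n) :=
    (((isStarNormal_add_I_smul_iff ha hc).mp (hsac ▸ hs)).sub_left
      (Algebra.commute_algebraMap_left _ _)).sub_right (Algebra.commute_algebraMap_right _ _)
  rw [hdec, Real.le_sqrt (norm_nonneg _) (by positivity)]
  calc _ ≤ ‖a - algebraMap ℂ E m‖ ^ 2 + ‖c - algebraMap ℂ E n‖ ^ 2 :=
        norm_add_I_smul_sq_le (ha.sub hm) (hc.sub hn) hcomm
    _ ≤ r ^ 2 + q ^ 2 := by gcongr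

end CStarAlgebra

section InnerProductSpace

open RCLike ContinuousLinearMap

variable {𝕜 E : Type*} [RCLike 𝕜] [NormedAddCommGroup E] [InnerProductSpace 𝕜 E]

lemma ContinuousLinearMap.norm_le_of_abs_re_inner_le {T : E →L[𝕜] E} (hT : T.IsSymmetric)
    {K : ℝ} (hK : 0 ≤ K) (h : ∀ x, |re (inner 𝕜 (T x) x)| ≤ K * ‖x‖ ^ 2) : ‖T‖ ≤ K := by
  rw [T.norm_eq_iSup_rayleighQuotient hT]
  refine ciSup_le fun x => ?_
  rcases eq_or_ne x 0 with rfl | hx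
  · simpa using hK
  rw [rayleighQuotient, reApplyInnerSelf_apply, abs_div, abs_sq,
    div_le_iff₀ (by positivity)]
  exact h x

lemma IsSelfAdjoint.norm_sub_algebraMap_midpoint_le [CompleteSpace E] {T : E →L[𝕜] E}
    (hT : IsSelfAdjoint T) {t₁ t₂ : ℝ} (h₁ : ∀ x, t₁ * ‖x‖ ^ 2 ≤ re (inner 𝕜 (T x) x))
    (h₂ : ∀ x, re (inner 𝕜 (T x) x) ≤ t₂ * ‖x‖ ^ 2) :
    ‖T - algebraMap 𝕜 (E →L[𝕜] E) ((t₁ + t₂) / 2 : ℝ)‖ ≤ |t₂ - t₁| / 2 := by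
  have hsa : IsSelfAdjoint (T - algebraMap 𝕜 (E →L[𝕜] E) ((t₁ + t₂) / 2 : ℝ)) :=
    hT.sub (.algebraMap _ (RCLike.conj_ofReal _))
  refine norm_le_of_abs_re_inner_le hsa.isSymmetric (by positivity) fun x => ?_
  have hre : re (inner 𝕜 ((T - algebraMap 𝕜 (E →L[𝕜] E) ((t₁ + t₂) / 2 : ℝ)) x) x)
      = re (inner 𝕜 (T x) x) - (t₁ + t₂) / 2 * ‖x‖ ^ 2 := by
    rw [Algebra.algebraMap_eq_smul_one (A := E →L[𝕜] E)]
    simp only [sub_apply, smul_apply, one_apply_eq_self, inner_sub_left, inner_smul_left,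
      RCLike.conj_ofReal, map_sub, RCLike.re_ofReal_mul, inner_self_eq_norm_sq]
  rw [hre, abs_le]
  constructor <;> nlinarith [h₁ x, h₂ x, le_abs_self (t₂ - t₁), sq_nonneg ‖x‖]

end InnerProductSpace

lemma commutator_sub_algebraMap {R A : Type*} [CommSemiring R] [Ring A] [Algebra R A]
    (s t : A) (r q : R) :
    (s - algebraMap R A r) * (t - algebraMap R A q) -
      (t - algebraMap R A q) * (s - algebraMap R A r) = s * t - t * s := by
  simp only [sub_mul, mul_sub, ← Algebra.commutes r t, ← Algebra.commutes q s, ← map_mul,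
    mul_comm q r]
  abel

lemma norm_commutator_le {A : Type*} [NonUnitalSeminormedRing A] (a b : A) :
    ‖a * b - b * a‖ ≤ 2 * (‖a‖ * ‖b‖) := by
  calc ‖a * b - b * a‖ ≤ ‖a * b‖ + ‖b * a‖ := norm_sub_le _ _
    _ ≤ ‖a‖ * ‖b‖ + ‖b‖ * ‖a‖ := add_le_add (norm_mul_le a b) (norm_mul_le b a)
    _ = 2 * (‖a‖ * ‖b‖) := by ring

lemma Real.sqrt_half_abs_sq_add_half_abs_sq (x y : ℝ) :
    √((|x| / 2) ^ 2 + (|y| / 2) ^ 2) = √(x ^ 2 + y ^ 2) / 2 := by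
  rw [div_pow, div_pow, sq_abs, sq_abs, ← add_div, Real.sqrt_div' _ (by norm_num),
    Real.sqrt_sq (by norm_num)]

lemma exists_norm_sub_algebraMap_le_of_cartesian {H : Type*} [NormedAddCommGroup H]
    [InnerProductSpace ℂ H] [CompleteSpace H] {S A C : H →L[ℂ] H} (hS : IsStarNormal S)
    (hA : IsSelfAdjoint A) (hC : IsSelfAdjoint C) (hSdec : S = A + I • C) {a₁ a₂ c₁ c₂ : ℝ}
    (hA₁ : ∀ x, a₁ * ‖x‖ ^ 2 ≤ (inner ℂ (A x) x).re)
    (hA₂ : ∀ x, (inner ℂ (A x) x).re ≤ a₂ * ‖x‖ ^ 2)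
    (hC₁ : ∀ x, c₁ * ‖x‖ ^ 2 ≤ (inner ℂ (C x) x).re)
    (hC₂ : ∀ x, (inner ℂ (C x) x).re ≤ c₂ * ‖x‖ ^ 2) :
    ∃ μ : ℂ, ‖S - algebraMap ℂ (H →L[ℂ] H) μ‖ ≤ √((a₂ - a₁) ^ 2 + (c₂ - c₁) ^ 2) / 2 :=
  ⟨_, Real.sqrt_half_abs_sq_add_half_abs_sq (a₂ - a₁) (c₂ - c₁) ▸
    norm_sub_algebraMap_le_of_cartesian hS hA hC hSdec
      (hA.norm_sub_algebraMap_midpoint_le hA₁ hA₂) (hC.norm_sub_algebraMap_midpoint_le hC₁ hC₂)⟩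

/-- For normal operators `S = A + iC`, `T = B + iD` with
`a₁ ≤ A ≤ a₂`, `b₁ ≤ B ≤ b₂`, `c₁ ≤ C ≤ c₂`, `d₁ ≤ D ≤ d₂`, we have
`‖ST − TS‖ ≤ (1/2)√((a₂−a₁)² + (c₂−c₁)²)·√((b₂−b₁)² + (d₂−d₁)²)`. -/
theorem commutator_norm_bound_of_cartesian
    {H : Type*} [NormedAddCommGroup H] [InnerProductSpace ℂ H] [CompleteSpace H]
    (S T A B C D : H →L[ℂ] H)
    (hS : IsStarNormal S) (hT : IsStarNormal T)
    (hA : IsSelfAdjoint A) (hB : IsSelfAdjoint B)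
    (hC : IsSelfAdjoint C) (hD : IsSelfAdjoint D)
    (hSdec : S = A + Complex.I • C) (hTdec : T = B + Complex.I • D)
    (a₁ a₂ b₁ b₂ c₁ c₂ d₁ d₂ : ℝ)
    (hA₁ : ∀ x : H, a₁ * ‖x‖ ^ 2 ≤ (inner ℂ (A x) x : ℂ).re)
    (hA₂ : ∀ x : H, (inner ℂ (A x) x : ℂ).re ≤ a₂ * ‖x‖ ^ 2)
    (hB₁ : ∀ x : H, b₁ * ‖x‖ ^ 2 ≤ (inner ℂ (B x) x : ℂ).re)
    (hB₂ : ∀ x : H, (inner ℂ (B x) x : ℂ).re ≤ b₂ * ‖x‖ ^ 2)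
    (hC₁ : ∀ x : H, c₁ * ‖x‖ ^ 2 ≤ (inner ℂ (C x) x : ℂ).re)
    (hC₂ : ∀ x : H, (inner ℂ (C x) x : ℂ).re ≤ c₂ * ‖x‖ ^ 2)
    (hD₁ : ∀ x : H, d₁ * ‖x‖ ^ 2 ≤ (inner ℂ (D x) x : ℂ).re)
    (hD₂ : ∀ x : H, (inner ℂ (D x) x : ℂ).re ≤ d₂ * ‖x‖ ^ 2) :
    ‖S * T - T * S‖ ≤
      (1 / 2) * Real.sqrt ((a₂ - a₁) ^ 2 + (c₂ - c₁) ^ 2) *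
        Real.sqrt ((b₂ - b₁) ^ 2 + (d₂ - d₁) ^ 2) := by
  obtain ⟨μ, hμ⟩ := exists_norm_sub_algebraMap_le_of_cartesian hS hA hC hSdec hA₁ hA₂ hC₁ hC₂
  obtain ⟨ν, hν⟩ := exists_norm_sub_algebraMap_le_of_cartesian hT hB hD hTdec hB₁ hB₂ hD₁ hD₂
  rw [← commutator_sub_algebraMap S T μ ν]
  calc _ ≤ 2 * (‖S - algebraMap ℂ _ μ‖ * ‖T - algebraMap ℂ _ ν‖) := norm_commutator_le _ _
    _ ≤ 2 * (√((a₂ - a₁) ^ 2 + (c₂ - c₁) ^ 2) / 2 * (√((b₂ - b₁) ^ 2 + (d₂ - d₁) ^ 2) / 2)) := by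
      gcongr
    _ = _ := by ring
end

section
/- Let n be a finite index type and let S, T be normal n×n complex matrices such that the product ST is also normal. Then the Frobenius (Hilbert–Schmidt) norm satisfies ‖ST‖₂ ≤ ‖TS‖₂. -/
open scoped Matrix ComplexOrder

/-- The Frobenius (Hilbert–Schmidt) norm of a matrix: `(Σᵢⱼ |Mᵢⱼ|²)^{1/2}`. -/
noncomputable def frobNorm {n : Type*} [Fintype n] (M : Matrix n n ℂ) : ℝ :=
  Real.sqrt (∑ i, ∑ j, ‖M i j‖ ^ 2)

/-!
The squared Frobenius norm of `M` is `tr (Mᴴ M)`. By cyclicity of the trace,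
`tr ((ST)ᴴ ST) = tr (SᴴS · TTᴴ)` and `tr ((TS)ᴴ TS) = tr (SSᴴ · TᴴT)`, and these agree when
`S` and `T` are normal. So in fact `‖ST‖₂ = ‖TS‖₂`.
-/

namespace Matrix

variable {m n R : Type*} [Fintype m] [Fintype n]

theorem ofReal_sum_sum_norm_sq_eq_trace (M : Matrix m n ℂ) :
    ((∑ i, ∑ j, ‖M i j‖ ^ 2 : ℝ) : ℂ) = (Mᴴ * M).trace := by
  simp only [trace, diag, mul_apply, conjTranspose_apply, Complex.star_def, Complex.conj_mul']
  push_cast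
  exact Finset.sum_comm

theorem trace_conjTranspose_mul_self_mul_comm [CommSemiring R] [StarRing R]
    {S T : Matrix n n R} (hS : Commute S Sᴴ) (hT : Commute T Tᴴ) :
    ((S * T)ᴴ * (S * T)).trace = ((T * S)ᴴ * (T * S)).trace :=
  calc ((S * T)ᴴ * (S * T)).trace
      = (Tᴴ * (Sᴴ * S * T)).trace := by simp only [conjTranspose_mul, mul_assoc]
    _ = (Sᴴ * S * (T * Tᴴ)).trace := by rw [trace_mul_comm, mul_assoc]
    _ = (S * Sᴴ * (Tᴴ * T)).trace := by rw [hS.eq, hT.eq]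
    _ = (Sᴴ * (Tᴴ * T * S)).trace := by rw [mul_assoc, trace_mul_comm, mul_assoc]
    _ = ((T * S)ᴴ * (T * S)).trace := by simp only [conjTranspose_mul, mul_assoc]

end Matrix

theorem frobNorm_eq_of_trace_conjTranspose_mul_self_eq {n : Type*} [Fintype n]
    {M N : Matrix n n ℂ} (h : (Mᴴ * M).trace = (Nᴴ * N).trace) :
    frobNorm M = frobNorm N := by
  rw [← Matrix.ofReal_sum_sum_norm_sq_eq_trace, ← Matrix.ofReal_sum_sum_norm_sq_eq_trace] at h
  rw [frobNorm, frobNorm, Complex.ofReal_injective h]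

theorem frobNorm_mul_comm_of_normal {n : Type*} [Fintype n] {S T : Matrix n n ℂ}
    (hS : Commute S Sᴴ) (hT : Commute T Tᴴ) :
    frobNorm (S * T) = frobNorm (T * S) :=
  frobNorm_eq_of_trace_conjTranspose_mul_self_eq
    (Matrix.trace_conjTranspose_mul_self_mul_comm hS hT)

theorem frobNorm_mul_le_frobNorm_mul_of_normal_general
    {n : Type*} [Fintype n] (S T : Matrix n n ℂ)
    (hS : S * Sᴴ = Sᴴ * S) (hT : T * Tᴴ = Tᴴ * T) :
    frobNorm (S * T) ≤ frobNorm (T * S) :=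
  (frobNorm_mul_comm_of_normal hS hT).le

/-- if `S`, `T` and `ST` are normal matrices, then `‖ST‖₂ ≤ ‖TS‖₂`
in the Frobenius norm. -/
theorem frobNorm_mul_le_frobNorm_mul_of_normal
    {n : Type*} [Fintype n] (S T : Matrix n n ℂ)
    (hS : S * Sᴴ = Sᴴ * S) (hT : T * Tᴴ = Tᴴ * T)
    (hST : (S * T) * (S * T)ᴴ = (S * T)ᴴ * (S * T)) :
    frobNorm (S * T) ≤ frobNorm (T * S) :=
  frobNorm_mul_le_frobNorm_mul_of_normal_general S T hS hT
end

section
/- Let n be a finite index type, let S, T be Hermitian n×n complex matrices, and let X be a positive definite n×n complex matrix. Then the Frobenius (Hilbert–Schmidt) norm satisfies ‖S − T‖₂² ≤ ‖SX − XT‖₂·‖X⁻¹S − TX⁻¹‖₂. -/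
open scoped Matrix ComplexOrder

section aux

variable {n : Type*} [Fintype n]

lemma frobNorm_nonneg (M : Matrix n n ℂ) : 0 ≤ frobNorm M := Real.sqrt_nonneg _

lemma frobNorm_sq (M : Matrix n n ℂ) : frobNorm M ^ 2 = ∑ i, ∑ j, ‖M i j‖ ^ 2 :=
  Real.sq_sqrt (by positivity)

lemma trace_conjTranspose_mul_re (M : Matrix n n ℂ) :
    (Matrix.trace (Mᴴ * M)).re = ∑ i, ∑ j, ‖M i j‖ ^ 2 := by
  simp only [Matrix.trace, Matrix.diag, Matrix.mul_apply, Matrix.conjTranspose_apply,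
    Complex.re_sum]
  rw [Finset.sum_comm]
  congr 1; ext i; congr 1; ext j
  have : star (M i j) = (starRingEnd ℂ) (M i j) := rfl
  rw [this, ← Complex.normSq_eq_conj_mul_self]
  rw [Complex.ofReal_re, Complex.normSq_eq_norm_sq]

lemma frobNorm_conjTranspose (M : Matrix n n ℂ) : frobNorm Mᴴ = frobNorm M := by
  unfold frobNorm
  rw [Finset.sum_comm]
  congr 1
  simp [Matrix.conjTranspose_apply]

/-- Cauchy–Schwarz for the Frobenius inner product. -/
lemma trace_re_le_frobNorm_mul (A B : Matrix n n ℂ) :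
    (Matrix.trace (Aᴴ * B)).re ≤ frobNorm A * frobNorm B := by
  have hcs := Real.sum_mul_le_sqrt_mul_sqrt (Finset.univ : Finset (n × n))
    (fun p => ‖A p.1 p.2‖) (fun p => ‖B p.1 p.2‖)
  rw [Fintype.sum_prod_type, Fintype.sum_prod_type, Fintype.sum_prod_type] at hcs
  have h1 : (Matrix.trace (Aᴴ * B)).re ≤ ∑ i, ∑ j, ‖A i j‖ * ‖B i j‖ := by
    simp only [Matrix.trace, Matrix.diag, Matrix.mul_apply, Matrix.conjTranspose_apply,
      Complex.re_sum]
    rw [Finset.sum_comm]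
    refine Finset.sum_le_sum fun i _ => Finset.sum_le_sum fun j _ => ?_
    calc (star (A i j) * B i j).re ≤ ‖star (A i j) * B i j‖ := Complex.re_le_norm _
      _ = ‖A i j‖ * ‖B i j‖ := by rw [norm_mul, norm_star]
  exact h1.trans (by simpa [frobNorm] using hcs)

lemma frobNorm_sq_eq_trace_re (M : Matrix n n ℂ) :
    frobNorm M ^ 2 = (Matrix.trace (Mᴴ * M)).re := by
  rw [frobNorm_sq, trace_conjTranspose_mul_re]

open scoped MatrixOrder in
/-- Key inequality: for Hermitian `M` and positive definite `X`,
`Re tr(M²) ≤ Re tr(M X⁻¹ M X)`. -/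
lemma trace_sq_le_trace_conj {n : Type*} [Fintype n] [DecidableEq n]
    (M X : Matrix n n ℂ) (hM : M.IsHermitian) (hX : X.PosDef) :
    (Matrix.trace (M * M)).re ≤ (Matrix.trace (M * X⁻¹ * M * X)).re := by
  set Y := CFC.sqrt X with hYdef
  have hYH : Y.IsHermitian := (Matrix.nonneg_iff_posSemidef.mp (CFC.sqrt_nonneg X)).1
  have hYY : Y * Y = X := CFC.sqrt_mul_sqrt_self X hX.posSemidef.nonneg
  have hYdet : IsUnit Y.det := by
    have hXdet : IsUnit X.det := (Matrix.isUnit_iff_isUnit_det X).mp hX.isUnit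
    rw [← hYY, Matrix.det_mul] at hXdet
    exact isUnit_of_mul_isUnit_left hXdet
  have hYinv : Y * Y⁻¹ = 1 := Matrix.mul_nonsing_inv Y hYdet
  have hXinv : X⁻¹ = Y⁻¹ * Y⁻¹ := by rw [← hYY, Matrix.mul_inv_rev]
  set N := Y⁻¹ * M * Y with hNdef
  have hNH : Nᴴ = Y * M * Y⁻¹ := by
    rw [hNdef, Matrix.conjTranspose_mul, Matrix.conjTranspose_mul,
      Matrix.conjTranspose_nonsing_inv, hYH.eq, hM.eq, Matrix.mul_assoc]
  have h2 : Matrix.trace (Nᴴ * N) = Matrix.trace (M * X⁻¹ * M * X) := by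
    have : Nᴴ * N = Y * (M * X⁻¹ * M) * Y := by
      rw [hNH, hNdef, hXinv]
      noncomm_ring
    calc Matrix.trace (Nᴴ * N) = Matrix.trace (Y * (M * X⁻¹ * M) * Y) := by rw [this]
      _ = Matrix.trace (Y * (Y * (M * X⁻¹ * M))) := Matrix.trace_mul_comm _ _
      _ = Matrix.trace ((M * X⁻¹ * M) * (Y * Y)) := by
          rw [← Matrix.mul_assoc]; exact Matrix.trace_mul_comm _ _
      _ = Matrix.trace (M * X⁻¹ * M * X) := by rw [hYY]
  have h3 : Matrix.trace (N * N) = Matrix.trace (M * M) := by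
    have : N * N = Y⁻¹ * (M * M * Y) := by
      rw [hNdef]
      have : Y⁻¹ * M * Y * (Y⁻¹ * M * Y) = Y⁻¹ * M * (Y * Y⁻¹) * M * Y := by noncomm_ring
      rw [this, hYinv]
      noncomm_ring
    rw [this, Matrix.trace_mul_comm, Matrix.mul_assoc, hYinv, Matrix.mul_one]
  calc (Matrix.trace (M * M)).re = (Matrix.trace ((Nᴴ)ᴴ * N)).re := by
        rw [Matrix.conjTranspose_conjTranspose, h3]
    _ ≤ frobNorm Nᴴ * frobNorm N := trace_re_le_frobNorm_mul _ _
    _ = frobNorm N ^ 2 := by rw [frobNorm_conjTranspose, sq]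
    _ = (Matrix.trace (Nᴴ * N)).re := frobNorm_sq_eq_trace_re N
    _ = (Matrix.trace (M * X⁻¹ * M * X)).re := by rw [h2]

end aux

/-- for Hermitian `S, T` and positive definite `X`,
`‖S − T‖₂² ≤ ‖SX − XT‖₂·‖X⁻¹S − TX⁻¹‖₂`. -/
theorem frobNorm_sub_sq_le
    {n : Type*} [Fintype n] [DecidableEq n] (S T X : Matrix n n ℂ)
    (hS : S.IsHermitian) (hT : T.IsHermitian) (hX : X.PosDef) :
    frobNorm (S - T) ^ 2 ≤ frobNorm (S * X - X * T) * frobNorm (X⁻¹ * S - T * X⁻¹) := by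
  have hXH : Xᴴ = X := hX.1
  have hXinvH : (X⁻¹)ᴴ = X⁻¹ := by rw [Matrix.conjTranspose_nonsing_inv, hXH]
  have hXinv : X⁻¹ * X = 1 := Matrix.nonsing_inv_mul X ((Matrix.isUnit_iff_isUnit_det X).mp hX.isUnit)
  set A := S * X - X * T with hA
  set B := X⁻¹ * S - T * X⁻¹ with hB
  have hBH : Bᴴ = S * X⁻¹ - X⁻¹ * T := by
    rw [hB, Matrix.conjTranspose_sub, Matrix.conjTranspose_mul, Matrix.conjTranspose_mul,
      hXinvH, hS.eq, hT.eq]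
  -- trace (Bᴴ * A) expansion
  have hexp : Matrix.trace (Bᴴ * A) =
      Matrix.trace (S * X⁻¹ * S * X) + Matrix.trace (T * X⁻¹ * T * X)
        - Matrix.trace (S * T) - Matrix.trace (T * S) := by
    have hprod : Bᴴ * A = S * X⁻¹ * S * X - S * (X⁻¹ * X) * T
        - X⁻¹ * T * S * X + X⁻¹ * (T * X * T) := by
      rw [hBH, hA]; noncomm_ring
    rw [hprod]
    rw [Matrix.trace_add, Matrix.trace_sub, Matrix.trace_sub]
    have e1 : Matrix.trace (S * (X⁻¹ * X) * T) = Matrix.trace (S * T) := by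
      rw [hXinv, Matrix.mul_one]
    have e2 : Matrix.trace (X⁻¹ * T * S * X) = Matrix.trace (T * S) := by
      rw [Matrix.trace_mul_comm, ← Matrix.mul_assoc, ← Matrix.mul_assoc,
        Matrix.mul_nonsing_inv X ((Matrix.isUnit_iff_isUnit_det X).mp hX.isUnit),
        Matrix.one_mul]
    have e3 : Matrix.trace (X⁻¹ * (T * X * T)) = Matrix.trace (T * X⁻¹ * T * X) := by
      rw [Matrix.trace_mul_comm, Matrix.mul_assoc (T * X) T X⁻¹,
        Matrix.trace_mul_comm (T * X) (T * X⁻¹), ← Matrix.mul_assoc]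
    rw [e1, e2, e3]
    ring
  -- the squared Frobenius norm of S - T
  have hfs : frobNorm (S - T) ^ 2 =
      (Matrix.trace (S * S)).re + (Matrix.trace (T * T)).re
        - (Matrix.trace (S * T)).re - (Matrix.trace (T * S)).re := by
    rw [frobNorm_sq_eq_trace_re]
    have hSTH : (S - T)ᴴ = S - T := by rw [Matrix.conjTranspose_sub, hS.eq, hT.eq]
    rw [hSTH]
    have : (S - T) * (S - T) = S * S - S * T - T * S + T * T := by noncomm_ring
    rw [this, Matrix.trace_add, Matrix.trace_sub, Matrix.trace_sub]
    simp [Complex.add_re, Complex.sub_re]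
    ring
  calc frobNorm (S - T) ^ 2
      = (Matrix.trace (S * S)).re + (Matrix.trace (T * T)).re
        - (Matrix.trace (S * T)).re - (Matrix.trace (T * S)).re := hfs
    _ ≤ (Matrix.trace (S * X⁻¹ * S * X)).re + (Matrix.trace (T * X⁻¹ * T * X)).re
        - (Matrix.trace (S * T)).re - (Matrix.trace (T * S)).re := by
        have h1 := trace_sq_le_trace_conj S X hS hX
        have h2 := trace_sq_le_trace_conj T X hT hX
        linarith
    _ = (Matrix.trace (Bᴴ * A)).re := by
        rw [hexp]; simp [Complex.add_re, Complex.sub_re]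
    _ ≤ frobNorm B * frobNorm A := trace_re_le_frobNorm_mul B A
    _ = frobNorm A * frobNorm B := mul_comm _ _
end

section
/- Let H be a complex Hilbert space and let S, T, C be bounded linear operators on H. If the pair (S, T) satisfies the Fuglede–Putnam property and SC = CT, then S*SC = SS*C. -/
theorem mul_mul_eq_mul_mul_of_forall_intertwining {M : Type*} [Semigroup M] {S T S' T' C : M}
    (h : ∀ W : M, S * W = W * T → S' * W = W * T') (hC : S * C = C * T) :
    S' * S * C = S * S' * C := by
  have hSC : S * (S * C) = S * C * T := by rw [mul_assoc, hC]
  calc S' * S * C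
      = S' * (S * C) := mul_assoc _ _ _
    _ = S * C * T' := h _ hSC
    _ = S * (C * T') := mul_assoc _ _ _
    _ = S * (S' * C) := by rw [h C hC]
    _ = S * S' * C := (mul_assoc _ _ _).symm

/-- if the pair `(S, T)` satisfies the Fuglede–Putnam property and
`SC = CT`, then `S*SC = SS*C`. -/
theorem star_mul_eq_mul_star_of_fugledePutnam
    {H : Type*} [NormedAddCommGroup H] [InnerProductSpace ℂ H] [CompleteSpace H]
    (S T C : H →L[ℂ] H)
    (hFP : ∀ W : H →L[ℂ] H, S * W = W * T →
      ContinuousLinearMap.adjoint S * W = W * ContinuousLinearMap.adjoint T)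
    (hC : S * C = C * T) :
    ContinuousLinearMap.adjoint S * S * C = S * ContinuousLinearMap.adjoint S * C :=
  mul_mul_eq_mul_mul_of_forall_intertwining hFP hC
end
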